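/- Let F be a sun-like map of degree 1 on a lifted graph T, with finitely many branches (Xⁱ)_{i∈Λ}, each a compact interval attached to T_ℝ at its minimum endpoint. Then for every branch Xⁱ there exist finitely many disjoint nonempty compact intervals X^i_1 < ⋯ < X^i_{N_i} ⊂ Xⁱ, indices ℓ(X^i_j) ∈ Λ and integers p(X^i_j), such that: F(X^i_j) ⊂ (X^{ℓ(X^i_j)} + p(X^i_j)) ∪ int(T_ℝ); F(min X^i_j) = min X^{ℓ(X^i_j)} + p(X^i_j) ∈ T_ℝ; and F maps X minus the union of all X^i_j into the complement of X + ℤ. -/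

import Mathlib

open Set Filter Topology

/-- An abstract "sun-like" setting: a lifted graph `T` (metric space with a
translation `τ`, an embedded real line and its retraction `rR`), together with a
degree-one continuous map `F` whose set `X = closure(T ∖ T_ℝ) ∩ rR⁻¹[0,1)` is a
finite disjoint union of compact intervals (the branches), each attached to the
invariant set `T_ℝ` at its minimum endpoint. Branches are parametrized by
order-embeddings `emb i : [0, len i] → T`. -/
structure SunLike (T : Type) [MetricSpace T] where
  /-- the translation `x ↦ x + 1`, a homeomorphism -/
  τ : Equiv.Perm T
  τ_cont : Continuous τ
  τ_symm_cont : Continuous τ.symm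
  dist_inv : ∀ x y : T, dist (τ x) (τ y) = dist x y
  /-- the continuous degree-one map -/
  F : T → T
  F_cont : Continuous F
  deg1 : ∀ x, F (τ x) = τ (F x)
  /-- the embedded copy of `ℝ` -/
  line : ℝ → T
  line_cont : Continuous line
  line_inj : Function.Injective line
  line_tau : ∀ s, τ (line s) = line (s + 1)
  /-- the natural retraction `r_ℝ : T → ℝ` -/
  rR : T → ℝ
  rR_cont : Continuous rR
  rR_line : ∀ s, rR (line s) = s
  rR_tau : ∀ x, rR (τ x) = rR x + 1
  /-- `T_ℝ = closure (⋃ n, F^n(ℝ))` -/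
  TR : Set T
  TR_def : TR = closure (⋃ n : ℕ, F^[n] '' Set.range line)
  TR_inv : Set.MapsTo F TR TR
  /-- finitely many branches -/
  Λ : Type
  Λfin : Finite Λ
  len : Λ → ℝ
  len_pos : ∀ i, 0 < len i
  /-- parametrization of the branch `Xⁱ` by the interval `[0, len i]` -/
  emb : Λ → ℝ → T
  emb_cont : ∀ i, ContinuousOn (emb i) (Set.Icc 0 (len i))
  emb_inj : ∀ i, Set.InjOn (emb i) (Set.Icc 0 (len i))
  /-- the attachment point `min Xⁱ = emb i 0` lies in `T_ℝ` -/
  attach_mem : ∀ i, emb i 0 ∈ TR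
  /-- a branch meets `T_ℝ` exactly at its minimum endpoint -/
  branch_inter_TR : ∀ i, (emb i '' Set.Icc 0 (len i)) ∩ TR = {emb i 0}
  branch_open : ∀ i, IsOpen (emb i '' Set.Ioc 0 (len i))
  /-- `X = closure(T ∖ T_ℝ) ∩ r_ℝ⁻¹([0,1))` is the union of the branches -/
  branches_def : closure (TRᶜ) ∩ rR ⁻¹' Set.Ico (0 : ℝ) 1 = ⋃ i, emb i '' Set.Icc 0 (len i)
  /-- distinct integer translates of branches are disjoint -/
  translates_disjoint : ∀ i j : Λ, ∀ p q : ℤ, (i ≠ j ∨ p ≠ q) →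
    Disjoint ((τ ^ p) '' (emb i '' Set.Icc 0 (len i))) ((τ ^ q) '' (emb j '' Set.Icc 0 (len j)))
  /-- the natural retraction onto the branch `Xⁱ` -/
  ret : Λ → T → T
  ret_cont : ∀ i, Continuous (ret i)
  ret_id : ∀ i, ∀ x ∈ emb i '' Set.Icc 0 (len i), ret i x = x
  ret_out : ∀ i x, x ∉ emb i '' Set.Icc 0 (len i) → ret i x = emb i 0

namespace SunLike

variable {T : Type} [MetricSpace T] (S : SunLike T)

/-- the branch `Xⁱ` -/
def branch (i : S.Λ) : Set T := S.emb i '' Set.Icc 0 (S.len i)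

/-- `min Xⁱ`, the attachment point of the branch `Xⁱ` -/
def minB (i : S.Λ) : T := S.emb i 0

/-- `X`, the union of the branches -/
def X : Set T := ⋃ i, S.branch i

/-- `X + ℤ`, the union of all integer translates of the branches -/
def XZ : Set T := ⋃ p : ℤ, (S.τ ^ p) '' S.X

/-- `X^∞`: points of `X` whose whole orbit stays in `X + ℤ` -/
def Xinf : Set T := {x | x ∈ S.X ∧ ∀ n : ℕ, S.F^[n] x ∈ S.XZ}

/-- the order of the branch `Xⁱ` (minimum at the attachment point) -/
def ble (i : S.Λ) (x y : T) : Prop :=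
  ∃ s t : ℝ, s ∈ Set.Icc 0 (S.len i) ∧ t ∈ Set.Icc 0 (S.len i) ∧ s ≤ t ∧
    S.emb i s = x ∧ S.emb i t = y

/-- `I ⊂ Xⁱ` positively `F^n`-covers `J + p`, where `J ⊂ Xʲ`: there are `x ≤ y` in `I`
with `r_j(F^n(x) - p) ≤ min J` and `max J ≤ r_j(F^n(y) - p)`. -/
def PosCover (n : ℕ) (i j : S.Λ) (I J : Set T) (p : ℤ) : Prop :=
  ∃ x y, x ∈ I ∧ y ∈ I ∧ S.ble i x y ∧
    (∀ z ∈ J, S.ble j (S.ret j ((S.τ ^ (-p)) (S.F^[n] x))) z) ∧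
    (∀ z ∈ J, S.ble j z (S.ret j ((S.τ ^ (-p)) (S.F^[n] y))))

/-- `rot S x s` : the rotation number of `x` exists and equals `s` -/
def rot (x : T) (s : ℝ) : Prop :=
  Tendsto (fun n : ℕ => (S.rR (S.F^[n] x) - S.rR x) / (n : ℝ)) atTop (𝓝 s)

end SunLike

namespace SunLike

variable {T : Type} [MetricSpace T] (S : SunLike T)

lemma zpow_succ_apply (p : ℤ) (x : T) : (S.τ ^ (p + 1)) x = (S.τ ^ p) (S.τ x) := by
  rw [zpow_add_one]; rfl

lemma zpow_pred_apply (p : ℤ) (x : T) : (S.τ ^ (p - 1)) x = (S.τ ^ p) (S.τ.symm x) := by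
  rw [zpow_sub_one, ← Equiv.Perm.inv_def]; rfl

lemma dist_zpow (p : ℤ) (x y : T) : dist ((S.τ ^ p) x) ((S.τ ^ p) y) = dist x y := by
  induction p using Int.induction_on generalizing x y with
  | zero => simp
  | succ n ih =>
      rw [S.zpow_succ_apply, S.zpow_succ_apply, ih, S.dist_inv]
  | pred n ih =>
      rw [show (-(n : ℤ) - 1) = (-(n:ℤ)) - 1 by ring, S.zpow_pred_apply, S.zpow_pred_apply, ih]
      have := S.dist_inv (S.τ.symm x) (S.τ.symm y)
      simpa using this.symm

lemma isometry_zpow (p : ℤ) : Isometry ⇑(S.τ ^ p) :=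
  Isometry.of_dist_eq (S.dist_zpow p)

lemma continuous_zpow (p : ℤ) : Continuous ⇑(S.τ ^ p) :=
  (S.isometry_zpow p).continuous

lemma zpow_symm_eq (p : ℤ) : (S.τ ^ p).symm = S.τ ^ (-p) := by
  rw [← Equiv.Perm.inv_def, ← zpow_neg]

lemma continuous_zpow_symm (p : ℤ) : Continuous ⇑(S.τ ^ p).symm := by
  rw [S.zpow_symm_eq]; exact S.continuous_zpow (-p)

/-- `τ^p` as a homeomorphism. -/
noncomputable def homeoZpow (p : ℤ) : T ≃ₜ T :=
  ⟨S.τ ^ p, S.continuous_zpow p, S.continuous_zpow_symm p⟩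

lemma zpow_neg_apply_zpow (p : ℤ) (x : T) : (S.τ ^ (-p)) ((S.τ ^ p) x) = x := by
  rw [← Equiv.Perm.mul_apply, ← zpow_add, neg_add_cancel, zpow_zero, Equiv.Perm.one_apply]

lemma zpow_apply_zpow_neg (p : ℤ) (x : T) : (S.τ ^ p) ((S.τ ^ (-p)) x) = x := by
  rw [← Equiv.Perm.mul_apply, ← zpow_add, add_neg_cancel, zpow_zero, Equiv.Perm.one_apply]

lemma rR_tau_symm (x : T) : S.rR (S.τ.symm x) = S.rR x - 1 := by
  have := S.rR_tau (S.τ.symm x)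
  rw [Equiv.apply_symm_apply] at this
  linarith

lemma rR_zpow (p : ℤ) (x : T) : S.rR ((S.τ ^ p) x) = S.rR x + p := by
  induction p using Int.induction_on generalizing x with
  | zero => simp
  | succ n ih =>
      rw [S.zpow_succ_apply, ih, S.rR_tau]; push_cast; ring
  | pred n ih =>
      rw [show (-(n : ℤ) - 1) = (-(n:ℤ)) - 1 by ring, S.zpow_pred_apply, ih, S.rR_tau_symm]
      push_cast; ring

lemma iterate_tau (n : ℕ) (x : T) : S.F^[n] (S.τ x) = S.τ (S.F^[n] x) := by
  induction n generalizing x with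
  | zero => simp
  | succ n ih =>
      rw [Function.iterate_succ_apply, Function.iterate_succ_apply, S.deg1, ih]

lemma tau_image_line : S.τ '' Set.range S.line = Set.range S.line := by
  ext y
  constructor
  · rintro ⟨x, ⟨s, rfl⟩, rfl⟩
    exact ⟨s + 1, (S.line_tau s).symm⟩
  · rintro ⟨s, rfl⟩
    exact ⟨S.line (s - 1), ⟨s - 1, rfl⟩, by rw [S.line_tau, sub_add_cancel]⟩

/-- the translation as a homeomorphism -/
noncomputable def tauHomeo : T ≃ₜ T := ⟨S.τ, S.τ_cont, S.τ_symm_cont⟩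

lemma tau_image_TR : S.τ '' S.TR = S.TR := by
  have h1 : ∀ n : ℕ, S.τ '' (S.F^[n] '' Set.range S.line) = S.F^[n] '' Set.range S.line := by
    intro n
    rw [Set.image_image]
    have h2 : (fun x => S.τ (S.F^[n] x)) '' Set.range S.line
        = S.F^[n] '' (S.τ '' Set.range S.line) := by
      rw [Set.image_image]
      apply Set.image_congr
      intro x _
      exact (S.iterate_tau n x).symm
    rw [h2, S.tau_image_line]
  rw [S.TR_def]
  rw [show S.τ '' closure (⋃ n : ℕ, S.F^[n] '' Set.range S.line)
      = S.tauHomeo '' closure (⋃ n : ℕ, S.F^[n] '' Set.range S.line) from rfl]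
  rw [Homeomorph.image_closure, Set.image_iUnion]
  exact congrArg closure (Set.iUnion_congr fun n => h1 n)

lemma tau_symm_image_TR : S.τ.symm '' S.TR = S.TR := by
  conv_lhs => rw [← S.tau_image_TR]
  rw [Set.image_image]
  simp

lemma zpow_image_TR (p : ℤ) : ⇑(S.τ ^ p) '' S.TR = S.TR := by
  induction p using Int.induction_on with
  | zero => simp
  | succ n ih =>
      have : ⇑(S.τ ^ ((n : ℤ) + 1)) '' S.TR = ⇑(S.τ ^ (n : ℤ)) '' (S.τ '' S.TR) := by
        rw [Set.image_image]
        apply Set.image_congr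
        intro x _
        exact (S.zpow_succ_apply n x)
      rw [this, S.tau_image_TR, ih]
  | pred n ih =>
      have : ⇑(S.τ ^ (-(n : ℤ) - 1)) '' S.TR = ⇑(S.τ ^ (-(n : ℤ))) '' (S.τ.symm '' S.TR) := by
        rw [Set.image_image]
        apply Set.image_congr
        intro x _
        exact (S.zpow_pred_apply (-n) x)
      rw [this, S.tau_symm_image_TR, ih]

lemma mem_TR_zpow {x : T} (p : ℤ) (hx : x ∈ S.TR) : (S.τ ^ p) x ∈ S.TR := by
  rw [← S.zpow_image_TR p]; exact Set.mem_image_of_mem _ hx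

lemma zpow_image_closure_compl (p : ℤ) :
    ⇑(S.τ ^ p) '' closure S.TRᶜ = closure S.TRᶜ := by
  rw [show ⇑(S.τ ^ p) '' closure S.TRᶜ = S.homeoZpow p '' closure S.TRᶜ from rfl,
    Homeomorph.image_closure]
  rw [show S.homeoZpow p '' S.TRᶜ = ⇑(S.τ ^ p) '' S.TRᶜ from rfl,
    (S.τ ^ p).image_compl, S.zpow_image_TR]

lemma X_eq : S.X = closure S.TRᶜ ∩ S.rR ⁻¹' Set.Ico (0 : ℝ) 1 := by
  rw [S.branches_def]; rfl

lemma XZ_eq : S.XZ = closure S.TRᶜ := by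
  apply Set.Subset.antisymm
  · apply Set.iUnion_subset
    intro p
    rw [← S.zpow_image_closure_compl p]
    apply Set.image_mono
    rw [S.X_eq]
    exact Set.inter_subset_left
  · intro x hx
    set p : ℤ := ⌊S.rR x⌋ with hp
    have hy : (S.τ ^ (-p)) x ∈ S.X := by
      rw [S.X_eq]
      constructor
      · rw [← S.zpow_image_closure_compl (-p)]
        exact Set.mem_image_of_mem _ hx
      · simp only [Set.mem_preimage, S.rR_zpow]
        constructor
        · push_cast
          have := Int.floor_le (S.rR x); linarith
        · push_cast
          have := Int.lt_floor_add_one (S.rR x); linarith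
    apply Set.mem_iUnion.2 ⟨p, _⟩
    exact ⟨(S.τ ^ (-p)) x, hy, S.zpow_apply_zpow_neg p x⟩

lemma XZ_closed : IsClosed S.XZ := by rw [S.XZ_eq]; exact isClosed_closure

lemma not_mem_XZ_iff {x : T} : x ∉ S.XZ ↔ x ∈ interior S.TR := by
  rw [S.XZ_eq, closure_compl]
  simp

lemma branch_compact (j : S.Λ) : IsCompact (S.branch j) :=
  isCompact_Icc.image_of_continuousOn (S.emb_cont j)

lemma trans_compact (j : S.Λ) (p : ℤ) : IsCompact (⇑(S.τ ^ p) '' S.branch j) :=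
  (S.branch_compact j).image (S.continuous_zpow p)

lemma branch_rR {j : S.Λ} {x : T} (hx : x ∈ S.branch j) : S.rR x ∈ Set.Ico (0 : ℝ) 1 := by
  have : x ∈ closure S.TRᶜ ∩ S.rR ⁻¹' Set.Ico (0 : ℝ) 1 := by
    rw [S.X_eq.symm]; exact Set.mem_iUnion.2 ⟨j, hx⟩
  exact this.2

end SunLike

namespace SunLike

variable {T : Type} [MetricSpace T] (S : SunLike T)

theorem branch_partition (i : S.Λ) :
    ∃ (N : ℕ) (a b : ℕ → ℝ) (ℓv : ℕ → S.Λ) (pw : ℕ → ℤ),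
      (∀ j < N,
        a j ∈ Set.Icc 0 (S.len i) ∧ b j ∈ Set.Icc 0 (S.len i) ∧ a j ≤ b j ∧
        (j + 1 < N → b j < a (j + 1)) ∧
        S.F '' (S.emb i '' Set.Icc (a j) (b j)) ⊆
          (S.τ ^ pw j) '' S.branch (ℓv j) ∪ interior S.TR ∧
        S.F (S.emb i (a j)) = (S.τ ^ pw j) (S.minB (ℓv j)) ∧
        S.F (S.emb i (a j)) ∈ S.TR) ∧
      (∀ s ∈ Set.Icc 0 (S.len i),
        (∀ j < N, s ∉ Set.Icc (a j) (b j)) → S.F (S.emb i s) ∉ S.XZ) := by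
  classical
  haveI : Finite S.Λ := S.Λfin
  set L := S.len i with hL
  set g : ℝ → T := fun s => S.F (S.emb i s) with hgdef
  have hgc : ContinuousOn g (Set.Icc 0 L) := S.F_cont.comp_continuousOn (S.emb_cont i)
  set Tr : S.Λ × ℤ → Set T := fun p => ⇑(S.τ ^ p.2) '' S.branch p.1 with hTr
  have hpair : ∀ x ∈ S.XZ, ∃ p : S.Λ × ℤ, x ∈ Tr p := by
    intro x hx
    rcases Set.mem_iUnion.1 hx with ⟨q, y, hy, rfl⟩
    rcases Set.mem_iUnion.1 hy with ⟨j, hyj⟩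
    exact ⟨(j, q), ⟨y, hyj, rfl⟩⟩
  have hTrXZ : ∀ p : S.Λ × ℤ, Tr p ⊆ S.XZ := by
    intro p x hx
    exact Set.mem_iUnion.2 ⟨p.2,
      Set.image_mono (Set.subset_iUnion (fun j => S.branch j) p.1) hx⟩
  have huniq : ∀ p q : S.Λ × ℤ, ∀ x, x ∈ Tr p → x ∈ Tr q → p = q := by
    intro p q x hxp hxq
    by_contra hne
    have hor : p.1 ≠ q.1 ∨ p.2 ≠ q.2 := by
      by_contra h
      push_neg at h
      exact hne (Prod.ext h.1 h.2)
    exact Set.disjoint_left.1 (S.translates_disjoint p.1 q.1 p.2 q.2 hor) hxp hxq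
  set A : Set ℝ := {s | s ∈ Set.Icc 0 L ∧ g s ∈ S.XZ} with hA
  have hAsub : A ⊆ Set.Icc 0 L := fun s hs => hs.1
  have hAclosed : IsClosed A := by
    have heq : A = Set.Icc 0 L ∩ g ⁻¹' S.XZ := by
      ext s; constructor
      · intro hs; exact ⟨hs.1, hs.2⟩
      · intro hs; exact ⟨hs.1, hs.2⟩
    rw [heq]
    exact hgc.preimage_isClosed_of_isClosed isClosed_Icc S.XZ_closed
  have hAcomp : IsCompact A := isCompact_Icc.of_isClosed_subset hAclosed hAsub
  rcases Set.eq_empty_or_nonempty A with hAe | hAne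
  · refine ⟨0, fun _ => 0, fun _ => 0, fun _ => i, fun _ => 0, ?_, ?_⟩
    · intro j hj; omega
    · intro s hs _ hmem
      have hsA : s ∈ A := ⟨hs, hmem⟩
      rw [hAe] at hsA; exact hsA
  -- bound on rR over the image of the branch
  have hKcomp : IsCompact (S.F '' (S.emb i '' Set.Icc 0 L)) :=
    (isCompact_Icc.image_of_continuousOn (S.emb_cont i)).image S.F_cont
  have hKne : (S.F '' (S.emb i '' Set.Icc 0 L)).Nonempty :=
    ⟨g 0, Set.mem_image_of_mem _ (Set.mem_image_of_mem _ ⟨le_refl 0, le_of_lt (S.len_pos i)⟩)⟩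
  obtain ⟨z, hzK, hzmax⟩ := hKcomp.exists_isMaxOn hKne
    ((continuous_abs.comp S.rR_cont).continuousOn)
  set M : ℝ := |S.rR z| with hM
  have hMb : ∀ s ∈ Set.Icc 0 L, |S.rR (g s)| ≤ M := fun s hs =>
    hzmax (Set.mem_image_of_mem _ (Set.mem_image_of_mem _ hs))
  have hTr_rR : ∀ p : S.Λ × ℤ, ∀ x ∈ Tr p, S.rR x ∈ Set.Ico (p.2 : ℝ) (p.2 + 1) := by
    rintro p x ⟨y, hy, rfl⟩
    have hbr := S.branch_rR hy
    rw [S.rR_zpow]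
    exact ⟨by linarith [hbr.1], by linarith [hbr.2]⟩
  set Pset : Set (S.Λ × ℤ) := {p | (p.2 : ℝ) ∈ Set.Icc (-M - 1) M} with hPset
  have hmemP : ∀ s ∈ Set.Icc 0 L, ∀ p, g s ∈ Tr p → p ∈ Pset := by
    intro s hs p hp
    have h1 := hTr_rR p _ hp
    have h3 := abs_le.1 (hMb s hs)
    exact ⟨by linarith [h1.2], by linarith [h1.1]⟩
  have hQfin : {q : ℤ | (q : ℝ) ∈ Set.Icc (-M - 1) M}.Finite := by
    apply (Set.finite_Icc (⌈(-M - 1 : ℝ)⌉) (⌊M⌋)).subset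
    intro q hq
    exact ⟨Int.ceil_le.2 hq.1, Int.le_floor.2 hq.2⟩
  have hPfin : Pset.Finite := by
    have hsub : Pset ⊆ (Set.univ : Set S.Λ) ×ˢ {q : ℤ | (q : ℝ) ∈ Set.Icc (-M - 1) M} :=
      fun p hp => ⟨trivial, hp⟩
    exact (Set.Finite.prod Set.finite_univ hQfin).subset hsub
  have hsep : ∀ p ∈ Pset, ∃ ε > 0, ∀ x ∈ Tr p, ∀ q ∈ Pset, q ≠ p → ∀ y ∈ Tr q,
      ε ≤ dist x y := by
    intro p hp
    set B : Set T := ⋃ q ∈ Pset \ {p}, Tr q with hB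
    have hBclosed : IsClosed B := by
      apply Set.Finite.isClosed_biUnion (hPfin.subset Set.diff_subset)
      intro q _; exact (S.trans_compact q.1 q.2).isClosed
    have hdisj : Tr p ⊆ Bᶜ := by
      intro x hx hxB
      rcases Set.mem_iUnion₂.1 hxB with ⟨q, hq, hxq⟩
      have : q = p := huniq q p x hxq hx
      exact hq.2 (by simp [this])
    obtain ⟨ε, hε, hthick⟩ := (S.trans_compact p.1 p.2).exists_thickening_subset_open
      hBclosed.isOpen_compl hdisj
    refine ⟨ε, hε, ?_⟩
    intro x hx q hq hqp y hy
    by_contra hlt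
    push_neg at hlt
    have hyth : y ∈ Metric.thickening ε (Tr p) :=
      Metric.mem_thickening_iff.2 ⟨x, hx, by rwa [dist_comm]⟩
    exact (hthick hyth) (Set.mem_iUnion₂.2 ⟨q, ⟨hq, by simp [hqp]⟩, hy⟩)
  choose! εf hεf hsepf using hsep
  have hPne : Pset.Nonempty := by
    obtain ⟨s0, hs0⟩ := hAne
    obtain ⟨p0, hp0⟩ := hpair (g s0) hs0.2
    exact ⟨p0, hmemP s0 hs0.1 p0 hp0⟩
  have hPfne : hPfin.toFinset.Nonempty := by rwa [Set.Finite.toFinset_nonempty]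
  set δ0 : ℝ := hPfin.toFinset.inf' hPfne εf with hδ0
  have hδ0pos : 0 < δ0 := by
    rw [hδ0, Finset.lt_inf'_iff]
    intro p hp
    exact hεf p (hPfin.mem_toFinset.1 hp)
  have hsame0 : ∀ s ∈ Set.Icc 0 L, ∀ t ∈ Set.Icc 0 L, dist (g s) (g t) < δ0 →
      ∀ p q, g s ∈ Tr p → g t ∈ Tr q → p = q := by
    intro s hs t ht hd p q hp hq
    by_contra hne
    have hpP := hmemP s hs p hp
    have hqP := hmemP t ht q hq
    have h1 := hsepf p hpP _ hp q hqP (Ne.symm hne) _ hq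
    have h2 : δ0 ≤ εf p := Finset.inf'_le _ (hPfin.mem_toFinset.2 hpP)
    linarith
  obtain ⟨η, hη, hunif⟩ := Metric.uniformContinuousOn_iff.1
    (isCompact_Icc.uniformContinuousOn_of_continuous hgc) δ0 hδ0pos
  set δ : ℝ := η / 2 with hδdef
  have hδpos : 0 < δ := by positivity
  have hδ : ∀ s ∈ A, ∀ t ∈ A, |s - t| ≤ δ → ∀ p q, g s ∈ Tr p → g t ∈ Tr q → p = q := by
    intro s hs t ht hst p q hp hq
    apply hsame0 s hs.1 t ht.1 _ p q hp hq
    apply hunif s hs.1 t ht.1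
    rw [Real.dist_eq]
    linarith
  set D : Set ℝ := {s | s ∈ A ∧ A ∩ Set.Ico (s - δ) s = ∅} with hD
  have hDsep : ∀ s ∈ D, ∀ t ∈ D, s < t → s < t - δ := by
    intro s hs t ht hst
    by_contra h
    push_neg at h
    have hmem : s ∈ A ∩ Set.Ico (t - δ) t := ⟨hs.1, h, hst⟩
    rw [ht.2] at hmem; exact hmem
  have hDfin : D.Finite := by
    have hkey : ∀ s ∈ D, ∀ t ∈ D, s < t → ⌊s/δ⌋ < ⌊t/δ⌋ := by
      intro s hs t ht hst
      have h2 := hDsep s hs t ht hst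
      have h5 : s + δ ≤ t := by linarith
      have h6 : (s + δ) / δ ≤ t / δ := by
        apply div_le_div_of_nonneg_right h5 hδpos.le
      have h7 : (s + δ) / δ = s / δ + 1 := by field_simp
      have h3 : s / δ + 1 ≤ t / δ := by linarith
      have h4 : ⌊s/δ⌋ + 1 ≤ ⌊t/δ⌋ := by
        rw [← Int.floor_add_one]
        exact Int.floor_le_floor h3
      omega
    have himg : ((fun s => ⌊s / δ⌋) '' D) ⊆ Set.Icc (0 : ℤ) ⌊L / δ⌋ := by
      rintro _ ⟨s, hsD, rfl⟩
      have h0 : 0 ≤ s := (hAsub hsD.1).1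
      have h1 : s ≤ L := (hAsub hsD.1).2
      refine ⟨Int.floor_nonneg.2 (by positivity), Int.floor_le_floor ?_⟩
      apply div_le_div_of_nonneg_right h1 hδpos.le
    apply Set.Finite.of_finite_image ((Set.finite_Icc _ _).subset himg)
    intro s hs t ht hft
    by_contra hne
    rcases lt_or_gt_of_ne hne with h | h
    · exact absurd hft (ne_of_lt (hkey s hs t ht h))
    · exact absurd hft (ne_of_gt (hkey t ht s hs h))
  have hsInfA : sInf A ∈ A := hAcomp.sInf_mem hAne
  have hDne : sInf A ∈ D := by
    refine ⟨hsInfA, ?_⟩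
    ext t
    simp only [Set.mem_inter_iff, Set.mem_Ico, Set.mem_empty_iff_false, iff_false, not_and]
    intro htA h1 h2
    have := csInf_le hAcomp.bddBelow htA
    linarith
  set l := hDfin.toFinset.sort (· ≤ ·) with hl
  set N := l.length with hN
  set a : ℕ → ℝ := fun j => l.getD j 0 with ha
  have hlsorted : l.SortedLT := hDfin.toFinset.sortedLT_sort
  have haget : ∀ j (hj : j < N), a j = l.get ⟨j, hj⟩ := by
    intro j hj
    show l.getD j 0 = l.get ⟨j, hj⟩
    rw [List.getD_eq_getElem l 0 hj, List.get_eq_getElem]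
  have haD : ∀ j, j < N → a j ∈ D := by
    intro j hj
    rw [haget j hj]
    exact hDfin.mem_toFinset.1 ((Finset.mem_sort _).1 (l.get_mem _))
  have ha_lt : ∀ j k : ℕ, j < k → k < N → a j < a k := by
    intro j k hjk hk
    have hj : j < N := lt_trans hjk hk
    rw [haget j hj, haget k hk]
    exact hlsorted.strictMono_get (show (⟨j, hj⟩ : Fin l.length) < ⟨k, hk⟩ from hjk)
  have ha_le : ∀ j k : ℕ, j ≤ k → k < N → a j ≤ a k := by
    intro j k hjk hk
    rcases eq_or_lt_of_le hjk with rfl | h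
    · exact le_refl _
    · exact le_of_lt (ha_lt j k h hk)
  have ha_surj : ∀ d ∈ D, ∃ j, ∃ hj : j < N, a j = d := by
    intro d hd
    have hdl : d ∈ l := (Finset.mem_sort _).2 (hDfin.mem_toFinset.2 hd)
    rcases List.mem_iff_get.1 hdl with ⟨⟨j, hj⟩, hval⟩
    exact ⟨j, hj, by rw [haget j hj]; exact hval⟩
  set a' : ℕ → ℝ := fun k => if h : k < N then a k else L + 1 with ha'
  have ha'pos : ∀ k, k < N → a' k = a k := by
    intro k hk; simp only [ha']; rw [dif_pos hk]
  have ha'neg : ∀ k, ¬ k < N → a' k = L + 1 := by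
    intro k hk; simp only [ha']; rw [dif_neg hk]
  set Blk : ℕ → Set ℝ := fun j => A ∩ Set.Ico (a j) (a' (j + 1)) with hBlk
  have hBlkA : ∀ j, Blk j ⊆ A := fun j => Set.inter_subset_left
  have haA : ∀ j, j < N → a j ∈ A := fun j hj => (haD j hj).1
  have h_lt_a' : ∀ j, j < N → a j < a' (j + 1) := by
    intro j hj
    by_cases h : j + 1 < N
    · rw [ha'pos _ h]; exact ha_lt j (j + 1) (by omega) h
    · rw [ha'neg _ h]
      have := (hAsub (haA j hj)).2
      linarith
  have hBlk_self : ∀ j, j < N → a j ∈ Blk j := fun j hj =>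
    ⟨haA j hj, le_refl _, h_lt_a' j hj⟩
  have hBlkbdd : ∀ j, BddAbove (Blk j) := fun j =>
    ⟨L, fun t ht => (hAsub (hBlkA j ht)).2⟩
  set b : ℕ → ℝ := fun j => sSup (Blk j) with hb
  have hBlk_D_gap : ∀ j, j + 1 < N → ∀ t ∈ Blk j, t ≤ a (j + 1) - δ := by
    intro j hj t ht
    have ha1D := haD (j + 1) hj
    by_contra h
    push_neg at h
    have htlt : t < a (j + 1) := by
      have h2 := ht.2.2
      rwa [ha'pos _ hj] at h2
    have hmem : t ∈ A ∩ Set.Ico (a (j + 1) - δ) (a (j + 1)) := ⟨ht.1, le_of_lt h, htlt⟩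
    rw [ha1D.2] at hmem; exact hmem
  have hb_A : ∀ j, j < N → b j ∈ A := by
    intro j hj
    have h1 : b j ∈ closure (Blk j) := csSup_mem_closure ⟨a j, hBlk_self j hj⟩ (hBlkbdd j)
    have h2 : closure (Blk j) ⊆ A := by
      rw [← hAclosed.closure_eq]; exact closure_mono (hBlkA j)
    exact h2 h1
  have hab : ∀ j, j < N → a j ≤ b j := fun j hj => le_csSup (hBlkbdd j) (hBlk_self j hj)
  have hbL : ∀ j, j < N → b j ≤ L := fun j hj =>
    csSup_le ⟨a j, hBlk_self j hj⟩ (fun t ht => (hAsub (hBlkA j ht)).2)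
  have hb_lt : ∀ j, j < N → b j < a' (j + 1) := by
    intro j hj
    by_cases h : j + 1 < N
    · have h1 : b j ≤ a (j + 1) - δ :=
        csSup_le ⟨a j, hBlk_self j hj⟩ (hBlk_D_gap j h)
      rw [ha'pos _ h]; linarith
    · rw [ha'neg _ h]; linarith [hbL j hj]
  have hb_memBlk : ∀ j, j < N → b j ∈ Blk j := fun j hj =>
    ⟨hb_A j hj, hab j hj, hb_lt j hj⟩
  -- constancy of the translate on each block
  have hconst : ∀ j, j < N → ∀ t ∈ Blk j, ∀ p q, g (a j) ∈ Tr p → g t ∈ Tr q → p = q := by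
    intro j hj t ht p q hp hq
    set C : Set ℝ := {u | u ∈ Blk j ∧ u ≤ t ∧ ∀ q', g u ∈ Tr q' → p = q'} with hC
    have haj_t : a j ≤ t := ht.2.1
    have hCne : a j ∈ C := by
      refine ⟨hBlk_self j hj, haj_t, ?_⟩
      intro q' hq'
      exact huniq p q' _ hp hq'
    have hCbdd : BddAbove C := ⟨t, fun u hu => hu.2.1⟩
    set u0 : ℝ := sSup C with hu0
    have hu0le : u0 ≤ t := csSup_le ⟨a j, hCne⟩ (fun u hu => hu.2.1)
    have hu0ge : a j ≤ u0 := le_csSup hCbdd hCne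
    have hCA : C ⊆ A := fun u hu => hBlkA j hu.1
    have hu0A : u0 ∈ A := by
      have h1 := csSup_mem_closure (⟨a j, hCne⟩ : C.Nonempty) hCbdd
      have h2 : closure C ⊆ A := by rw [← hAclosed.closure_eq]; exact closure_mono hCA
      exact h2 h1
    have hu0same : ∀ q', g u0 ∈ Tr q' → p = q' := by
      intro q' hq'
      obtain ⟨u, huC, hugt⟩ := exists_lt_of_lt_csSup ⟨a j, hCne⟩
        (show u0 - δ < sSup C by rw [← hu0]; linarith)
      have huA : u ∈ A := hCA huC
      have hule : u ≤ u0 := le_csSup hCbdd huC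
      obtain ⟨pu, hpu⟩ := hpair (g u) huA.2
      have h1 : p = pu := huC.2.2 pu hpu
      have h2 : pu = q' := hδ u huA u0 hu0A
        (by rw [abs_le]; constructor <;> linarith) pu q' hpu hq'
      exact h1.trans h2
    rcases eq_or_lt_of_le hu0le with heq | hlt
    · rw [← heq] at hq; exact hu0same q hq
    · exfalso
      set A' : Set ℝ := A ∩ Set.Ioc u0 t with hA'
      have hA'ne : t ∈ A' := ⟨hBlkA j ht, hlt, le_refl t⟩
      have hA'bdd : BddBelow A' := ⟨u0, fun v hv => le_of_lt hv.2.1⟩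
      set w : ℝ := sInf A' with hw
      have hwA : w ∈ A ∧ u0 ≤ w ∧ w ≤ t := by
        have h1 := csInf_mem_closure (⟨t, hA'ne⟩ : A'.Nonempty) hA'bdd
        have h2 : closure A' ⊆ A ∩ Set.Icc u0 t := by
          have hcl : IsClosed (A ∩ Set.Icc u0 t) := hAclosed.inter isClosed_Icc
          rw [← hcl.closure_eq]
          exact closure_mono (fun v hv => ⟨hv.1, le_of_lt hv.2.1, hv.2.2⟩)
        exact ⟨(h2 h1).1, (h2 h1).2.1, (h2 h1).2.2⟩
      by_cases hcase : w - u0 ≤ δ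
      · have hwsame : ∀ q', g w ∈ Tr q' → p = q' := by
          intro q' hq'
          obtain ⟨pu, hpu⟩ := hpair (g u0) hu0A.2
          have h1 : p = pu := hu0same pu hpu
          have h2 : pu = q' := hδ u0 hu0A w hwA.1
            (by rw [abs_le]; constructor <;> [linarith [hwA.2.1]; linarith [hwA.2.1]])
            pu q' hpu hq'
          exact h1.trans h2
        have hwC : w ∈ C := by
          exact ⟨⟨hwA.1, le_trans hu0ge hwA.2.1, lt_of_le_of_lt hwA.2.2 ht.2.2⟩,
            hwA.2.2, hwsame⟩
        have hwle : w ≤ u0 := le_csSup hCbdd hwC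
        have hwu0 : w = u0 := le_antisymm hwle hwA.2.1
        obtain ⟨u', hu'A', hu'lt⟩ := exists_lt_of_csInf_lt (⟨t, hA'ne⟩ : A'.Nonempty)
          (show sInf A' < w + δ by rw [← hw]; linarith)
        have hu'A : u' ∈ A := hu'A'.1
        have hu'gt : u0 < u' := hu'A'.2.1
        have hu'le : u' ≤ t := hu'A'.2.2
        have hu'u0 : u' - u0 ≤ δ := by
          have : u' < u0 + δ := by rw [← hwu0]; linarith
          linarith
        have hu'same : ∀ q', g u' ∈ Tr q' → p = q' := by
          intro q' hq'
          obtain ⟨pu, hpu⟩ := hpair (g u0) hu0A.2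
          have h1 : p = pu := hu0same pu hpu
          have h2 : pu = q' := hδ u0 hu0A u' hu'A
            (by rw [abs_le]; constructor <;> linarith) pu q' hpu hq'
          exact h1.trans h2
        have hu'C : u' ∈ C :=
          ⟨⟨hu'A, le_trans hu0ge (le_of_lt hu'gt), lt_of_le_of_lt hu'le ht.2.2⟩,
            hu'le, hu'same⟩
        have h5 := le_csSup hCbdd hu'C
        rw [← hu0] at h5
        linarith
      · push_neg at hcase
        have hwD : w ∈ D := by
          refine ⟨hwA.1, ?_⟩
          ext v
          simp only [Set.mem_inter_iff, Set.mem_Ico, Set.mem_empty_iff_false, iff_false,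
            not_and]
          intro hvA hv1 hv2
          have hvu0 : u0 < v := by linarith
          have hvt : v ≤ t := le_trans (le_of_lt hv2) hwA.2.2
          have hv3 : v ∈ A' := ⟨hvA, hvu0, hvt⟩
          have hv4 := csInf_le hA'bdd hv3
          rw [← hw] at hv4
          linarith
        obtain ⟨k, hk, hak⟩ := ha_surj w hwD
        have hjk : j < k := by
          by_contra h
          push_neg at h
          have h6 : a k ≤ a j := ha_le k j h hj
          rw [hak] at h6
          linarith [hwA.2.1, hu0ge]
        by_cases hN1 : j + 1 < N
        · have h1 : a (j + 1) ≤ a k := ha_le (j + 1) k (by omega) hk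
          have h2 : t < a' (j + 1) := ht.2.2
          rw [ha'pos _ hN1] at h2
          rw [hak] at h1
          linarith [hwA.2.2]
        · omega
  -- every point of A lies in some block
  have hcover : ∀ s ∈ A, ∃ j, ∃ hj : j < N, s ∈ Blk j := by
    intro s hsA
    have hstot : sInf A ≤ s := csInf_le hAcomp.bddBelow hsA
    set Dt := hDfin.toFinset.filter (fun d => d ≤ s) with hDt
    have hDtne : Dt.Nonempty :=
      ⟨sInf A, Finset.mem_filter.2 ⟨hDfin.mem_toFinset.2 hDne, hstot⟩⟩
    have hdmem := Finset.mem_filter.1 (Dt.max'_mem hDtne)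
    have hdD : Dt.max' hDtne ∈ D := hDfin.mem_toFinset.1 hdmem.1
    have hds : Dt.max' hDtne ≤ s := hdmem.2
    obtain ⟨j, hj, haj⟩ := ha_surj _ hdD
    refine ⟨j, hj, ⟨hsA, by rw [haj]; exact hds, ?_⟩⟩
    by_cases hN1 : j + 1 < N
    · rw [ha'pos _ hN1]
      by_contra h
      push_neg at h
      have h1D := haD (j + 1) hN1
      have hmem : a (j + 1) ∈ Dt := Finset.mem_filter.2 ⟨hDfin.mem_toFinset.2 h1D, h⟩
      have h2 := Finset.le_max' Dt _ hmem
      rw [← haj] at h2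
      have h3 := ha_lt j (j + 1) (by omega) hN1
      linarith
    · rw [ha'neg _ hN1]
      have := (hAsub hsA).2
      linarith
  -- the left endpoint of each block maps to a translated branch minimum
  have hend : ∀ j, j < N → ∀ p : S.Λ × ℤ, g (a j) ∈ Tr p →
      g (a j) = (S.τ ^ p.2) (S.minB p.1) := by
    intro j hj p hp
    obtain ⟨x, hx, hgx⟩ := hp
    obtain ⟨t, htIcc, rfl⟩ := hx
    by_cases ha0 : a j = 0
    · have h1 : g (a j) ∈ S.TR := by
        rw [ha0]
        exact S.TR_inv (S.attach_mem i)
      have h2 : (S.τ ^ (-p.2)) (g (a j)) ∈ S.TR := S.mem_TR_zpow _ h1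
      rw [← hgx, S.zpow_neg_apply_zpow] at h2
      have h3 : S.emb p.1 t ∈ (S.emb p.1 '' Set.Icc 0 (S.len p.1)) ∩ S.TR :=
        ⟨Set.mem_image_of_mem _ htIcc, h2⟩
      rw [S.branch_inter_TR] at h3
      rw [← hgx, h3]; rfl
    by_cases ht0 : t = 0
    · rw [← hgx, ht0]; rfl
    · exfalso
      have hapos : 0 < a j := lt_of_le_of_ne (hAsub (haA j hj)).1 (Ne.symm ha0)
      have htIoc : t ∈ Set.Ioc 0 (S.len p.1) :=
        ⟨lt_of_le_of_ne htIcc.1 (Ne.symm ht0), htIcc.2⟩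
      set U : Set T := ⇑(S.τ ^ p.2) '' (S.emb p.1 '' Set.Ioc 0 (S.len p.1)) with hU
      have hUopen : IsOpen U := by
        rw [hU, Equiv.image_eq_preimage_symm]
        exact (S.branch_open p.1).preimage (S.continuous_zpow_symm p.2)
      have hgU : g (a j) ∈ U := ⟨S.emb p.1 t, Set.mem_image_of_mem _ htIoc, hgx⟩
      have hUTr : U ⊆ Tr p := Set.image_mono (Set.image_mono Set.Ioc_subset_Icc_self)
      have hajIcc : a j ∈ Set.Icc 0 L := hAsub (haA j hj)
      have hcw : ContinuousWithinAt g (Set.Icc 0 L) (a j) := hgc (a j) hajIcc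
      have hev : g ⁻¹' U ∈ 𝓝[Set.Icc 0 L] (a j) := hcw (hUopen.mem_nhds hgU)
      obtain ⟨ε, hε, hball⟩ := Metric.mem_nhdsWithin_iff.1 hev
      set ηm : ℝ := min ε δ with hηm
      have hηmpos : 0 < ηm := lt_min hε hδpos
      set t' : ℝ := max (a j - ηm / 2) 0 with ht'
      have ht'lt : t' < a j := max_lt (by linarith) hapos
      have ht'Icc : t' ∈ Set.Icc 0 L := ⟨le_max_right _ _, le_trans (le_of_lt ht'lt) hajIcc.2⟩
      have ht'ge : a j - ηm / 2 ≤ t' := le_max_left _ _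
      have ht'near : |t' - a j| < ε := by
        have h2 : ηm ≤ ε := min_le_left _ _
        rw [abs_lt]; constructor <;> linarith
      have ht'U : g t' ∈ U := hball ⟨by rwa [Metric.mem_ball, Real.dist_eq], ht'Icc⟩
      have ht'A : t' ∈ A := ⟨ht'Icc, hTrXZ p (hUTr ht'U)⟩
      have hcontr : t' ∈ A ∩ Set.Ico (a j - δ) (a j) := by
        refine ⟨ht'A, ?_, ht'lt⟩
        have h2 : ηm ≤ δ := min_le_right _ _
        linarith
      have h3 := (haD j hj).2
      rw [h3] at hcontr
      exact hcontr
  -- choose the pair for each block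
  have hpick : ∀ j : ℕ, ∃ p : S.Λ × ℤ, j < N → g (a j) ∈ Tr p := by
    intro j
    by_cases hj : j < N
    · obtain ⟨p, hp⟩ := hpair (g (a j)) (haA j hj).2
      exact ⟨p, fun _ => hp⟩
    · exact ⟨(i, 0), fun h => absurd h hj⟩
  choose pr hpr using hpick
  refine ⟨N, a, b, fun j => (pr j).1, fun j => (pr j).2, ?_, ?_⟩
  · intro j hj
    have haIcc : a j ∈ Set.Icc 0 L := hAsub (haA j hj)
    have hbIcc : b j ∈ Set.Icc 0 L := hAsub (hb_A j hj)
    refine ⟨haIcc, hbIcc, hab j hj, ?_, ?_, ?_, ?_⟩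
    · intro hj1
      have h1 := hb_lt j hj
      rwa [ha'pos _ hj1] at h1
    · rintro y ⟨x, ⟨t, htab, rfl⟩, rfl⟩
      have htIcc : t ∈ Set.Icc 0 L := ⟨le_trans haIcc.1 htab.1, le_trans htab.2 hbIcc.2⟩
      by_cases hXZ : g t ∈ S.XZ
      · left
        have htA : t ∈ A := ⟨htIcc, hXZ⟩
        have htBlk : t ∈ Blk j := ⟨htA, htab.1, lt_of_le_of_lt htab.2 (hb_lt j hj)⟩
        obtain ⟨q, hq⟩ := hpair (g t) hXZ
        have heq := hconst j hj t htBlk (pr j) q (hpr j hj) hq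
        show S.F (S.emb i t) ∈ ⇑(S.τ ^ (pr j).2) '' S.branch (pr j).1
        rw [heq]
        exact hq
      · right
        exact S.not_mem_XZ_iff.1 hXZ
    · exact hend j hj (pr j) (hpr j hj)
    · have h1 := hend j hj (pr j) (hpr j hj)
      show S.F (S.emb i (a j)) ∈ S.TR
      have h2 : g (a j) = S.F (S.emb i (a j)) := rfl
      rw [← h2, h1]
      exact S.mem_TR_zpow _ (S.attach_mem (pr j).1)
  · intro s hs hnot hXZ
    have hsA : s ∈ A := ⟨hs, hXZ⟩
    obtain ⟨j, hj, hBlkj⟩ := hcover s hsA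
    exact hnot j hj ⟨hBlkj.2.1, le_csSup (hBlkbdd j) hBlkj⟩

end SunLike

/-- (existence of the basic partition) For every branch `Xⁱ` of a sun-like
map `F` there are finitely many disjoint nonempty compact intervals
`X^i_1 < ⋯ < X^i_{N_i} ⊂ Xⁱ` (given by parameters `a i j ≤ b i j` in `[0, len i]`),
indices `ℓ(X^i_j) ∈ Λ` and integers `p(X^i_j)` such that
`F(X^i_j) ⊆ (X^{ℓ(X^i_j)} + p(X^i_j)) ∪ int(T_ℝ)`,
`F(min X^i_j) = min X^{ℓ(X^i_j)} + p(X^i_j) ∈ T_ℝ`, and `F` maps the complement of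
the union of all the `X^i_j` in `X` into the complement of `X + ℤ`. -/
theorem exists_basic_partition {T : Type} [MetricSpace T] (S : SunLike T) :
    ∃ (N : S.Λ → ℕ) (a b : S.Λ → ℕ → ℝ) (ℓv : S.Λ → ℕ → S.Λ) (pw : S.Λ → ℕ → ℤ),
      (∀ i : S.Λ, ∀ j < N i,
        a i j ∈ Set.Icc 0 (S.len i) ∧ b i j ∈ Set.Icc 0 (S.len i) ∧ a i j ≤ b i j ∧
        (j + 1 < N i → b i j < a i (j + 1)) ∧
        S.F '' (S.emb i '' Set.Icc (a i j) (b i j)) ⊆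
          (S.τ ^ pw i j) '' S.branch (ℓv i j) ∪ interior S.TR ∧
        S.F (S.emb i (a i j)) = (S.τ ^ pw i j) (S.minB (ℓv i j)) ∧
        S.F (S.emb i (a i j)) ∈ S.TR) ∧
      (∀ x ∈ S.X, (∀ i : S.Λ, ∀ j < N i, x ∉ S.emb i '' Set.Icc (a i j) (b i j)) →
        S.F x ∉ S.XZ) := by
  classical
  choose N a b ℓv pw hmain hcompl using fun i : S.Λ => S.branch_partition i
  refine ⟨N, a, b, ℓv, pw, fun i j hj => hmain i j hj, ?_⟩
  intro x hx hnot hXZ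
  obtain ⟨i0, hxi⟩ := Set.mem_iUnion.1 hx
  obtain ⟨s, hsIcc, rfl⟩ := hxi
  refine hcompl i0 s hsIcc ?_ hXZ
  intro j hj hsin
  exact hnot i0 j hj (Set.mem_image_of_mem _ hsin)
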